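/- arXiv:1709.01150 — 2 statements merged into one kernel-verified Lean document; each statement's English description precedes it below -/
import Mathlib

section
/- For vectors v in ℝ^n not in the span of the all-ones vector, the map ρ_v(L) = v^T L^† v (where L^† is the Moore–Penrose pseudoinverse) is a homogeneous systemic measure of order -1 on Laplacians of connected graphs: ρ_v(κL) = κ^{-1} ρ_v(L) for κ > 0, and L1 ⪯ L2 implies ρ_v(L2) ≤ ρ_v(L1). -/
/-!
Homogeneity: `κ⁻¹ L†` satisfies the four Penrose equations for `κ L`, and these determine the
pseudoinverse uniquely.

Monotonicity: for `A ⪰ 0` one has `vᵀ A† v = max {2 vᵀy - yᵀ A y : y ∈ (ker A)ᗮ}`, the maximum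
being attained at `y = A† v`. Take `y = B† v` with `A ⪯ B`: it lies in `(ker B)ᗮ ⊆ (ker A)ᗮ`
since `ker A ⊆ ker B`, and `yᵀ A y ≤ yᵀ B y = vᵀ y`, so
`vᵀ B† v = vᵀ y ≤ 2 vᵀy - yᵀ A y ≤ vᵀ A† v`. For Laplacians of connected graphs
`ker L1 = span 𝟙 ⊆ ker L2`.
-/

open Matrix

/-- `B` is the Moore–Penrose pseudoinverse of `A`. -/
def IsMPInv {n : ℕ} (A B : Matrix (Fin n) (Fin n) ℝ) : Prop :=
  A * B * A = A ∧ B * A * B = B ∧ (A * B)ᵀ = A * B ∧ (B * A)ᵀ = B * A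

theorem Matrix.IsSymm.dotProduct_mulVec_comm {n : ℕ} {S : Matrix (Fin n) (Fin n) ℝ}
    (hS : S.IsSymm) (x y : Fin n → ℝ) : x ⬝ᵥ S *ᵥ y = y ⬝ᵥ S *ᵥ x := by
  rw [← dotProduct_transpose_mulVec, hS.eq]

theorem Matrix.PosSemidef.isSymm {n : ℕ} {A : Matrix (Fin n) (Fin n) ℝ} (hA : A.PosSemidef) :
    A.IsSymm :=
  isHermitian_iff_isSymm.mp hA.isHermitian

namespace IsMPInv

variable {n : ℕ} {A B Ad Bd : Matrix (Fin n) (Fin n) ℝ}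

theorem unique {C : Matrix (Fin n) (Fin n) ℝ} (hB : IsMPInv A B) (hC : IsMPInv A C) : B = C := by
  obtain ⟨b1, b2, b3, b4⟩ := hB
  obtain ⟨c1, c2, c3, c4⟩ := hC
  have hAB : A * B = A * C := by
    calc A * B = (A * C) * (A * B) := by rw [← Matrix.mul_assoc, c1]
      _ = ((A * B) * (A * C))ᵀ := by rw [transpose_mul, b3, c3]
      _ = A * C := by rw [← Matrix.mul_assoc, b1, c3]
  have hBA : B * A = C * A := by
    calc B * A = (B * A) * (C * A) := by rw [Matrix.mul_assoc, ← Matrix.mul_assoc A, c1]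
      _ = ((C * A) * (B * A))ᵀ := by rw [transpose_mul, b4, c4]
      _ = C * A := by rw [Matrix.mul_assoc, ← Matrix.mul_assoc A, b1, c4]
  calc B = B * A * B := b2.symm
    _ = B * A * C := by rw [Matrix.mul_assoc, hAB, ← Matrix.mul_assoc]
    _ = C := by rw [hBA, c2]

theorem transpose (h : IsMPInv A B) : IsMPInv Aᵀ Bᵀ := by
  obtain ⟨h1, h2, h3, h4⟩ := h
  refine ⟨?_, ?_, ?_, ?_⟩
  · rw [← transpose_mul, ← transpose_mul, ← Matrix.mul_assoc, h1]
  · rw [← transpose_mul, ← transpose_mul, ← Matrix.mul_assoc, h2]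
  · rw [← transpose_mul, transpose_transpose, h4]
  · rw [← transpose_mul, transpose_transpose, h3]

theorem isSymm (hA : A.IsSymm) (h : IsMPInv A B) : B.IsSymm :=
  (hA.eq ▸ h.transpose).unique h

theorem smul (h : IsMPInv A B) {κ : ℝ} (hκ : κ ≠ 0) : IsMPInv (κ • A) (κ⁻¹ • B) := by
  obtain ⟨h1, h2, h3, h4⟩ := h
  have hAB : (κ • A) * (κ⁻¹ • B) = A * B := by
    rw [smul_mul_smul_comm, mul_inv_cancel₀ hκ, one_smul]
  have hBA : (κ⁻¹ • B) * (κ • A) = B * A := by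
    rw [smul_mul_smul_comm, inv_mul_cancel₀ hκ, one_smul]
  exact ⟨by rw [hAB, mul_smul_comm, h1], by rw [hBA, mul_smul_comm, h2],
    by rw [hAB, h3], by rw [hBA, h4]⟩

theorem dotProduct_mulVec_self (hB : B.IsSymm) (hBd : IsMPInv B Bd) (v : Fin n → ℝ) :
    (Bd *ᵥ v) ⬝ᵥ B *ᵥ (Bd *ᵥ v) = v ⬝ᵥ Bd *ᵥ v := by
  rw [dotProduct_comm, (hBd.isSymm hB).dotProduct_mulVec_comm (B *ᵥ _), mulVec_mulVec,
    mulVec_mulVec, hBd.2.1]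

/-- `z = y - Ad A y` lies in `ker A ⊆ ker B`, so it is orthogonal both to `y = Bd B y` and to
`Ad A y`, hence to itself. -/
theorem mul_mulVec_eq_of_ker_le (hAd : IsMPInv A Ad) (hBd : IsMPInv B Bd)
    (hker : ∀ x, A *ᵥ x = 0 → B *ᵥ x = 0) {y : Fin n → ℝ} (hy : (Bd * B) *ᵥ y = y) :
    (Ad * A) *ᵥ y = y := by
  have hAz : A *ᵥ (y - (Ad * A) *ᵥ y) = 0 := by
    rw [mulVec_sub, mulVec_mulVec, ← Matrix.mul_assoc, hAd.1, sub_self]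
  have hPz : (Ad * A) *ᵥ (y - (Ad * A) *ᵥ y) = 0 := by
    rw [mulVec_sub, mulVec_mulVec, ← Matrix.mul_assoc, hAd.2.1, sub_self]
  have hzy : (y - (Ad * A) *ᵥ y) ⬝ᵥ y = 0 := by
    calc _ = (y - (Ad * A) *ᵥ y) ⬝ᵥ (Bd * B) *ᵥ y := by rw [hy]
      _ = 0 := by
        rw [IsSymm.dotProduct_mulVec_comm hBd.2.2.2, ← mulVec_mulVec, hker _ hAz, mulVec_zero,
          dotProduct_zero]
  have hzPy : (y - (Ad * A) *ᵥ y) ⬝ᵥ (Ad * A) *ᵥ y = 0 := by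
    rw [IsSymm.dotProduct_mulVec_comm hAd.2.2.2, hPz, dotProduct_zero]
  have hzz : (y - (Ad * A) *ᵥ y) ⬝ᵥ (y - (Ad * A) *ᵥ y) = 0 := by
    rw [dotProduct_sub, hzy, hzPy, sub_zero]
  exact sub_eq_zero.mp (dotProduct_self_eq_zero.mp hzz) |>.symm

theorem two_mul_dotProduct_sub_le (hA : A.PosSemidef) (hAd : IsMPInv A Ad)
    {v y : Fin n → ℝ} (hy : (Ad * A) *ᵥ y = y) :
    2 * (v ⬝ᵥ y) - y ⬝ᵥ A *ᵥ y ≤ v ⬝ᵥ Ad *ᵥ v := by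
  have hAs := hA.isSymm
  have hyAp : y ⬝ᵥ A *ᵥ (Ad *ᵥ v) = v ⬝ᵥ y := by
    rw [hAs.dotProduct_mulVec_comm, dotProduct_comm, (hAd.isSymm hAs).dotProduct_mulVec_comm,
      mulVec_mulVec, hy]
  have hnonneg := hA.dotProduct_mulVec_nonneg (y - Ad *ᵥ v)
  rw [star_trivial, mulVec_sub, sub_dotProduct, dotProduct_sub, dotProduct_sub, hyAp,
    hAs.dotProduct_mulVec_comm (Ad *ᵥ v), hyAp, dotProduct_mulVec_self hAs hAd] at hnonneg
  linarith

theorem dotProduct_mulVec_antitone (hA : A.PosSemidef) (hAB : (B - A).PosSemidef)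
    (hker : ∀ x, A *ᵥ x = 0 → B *ᵥ x = 0) (hAd : IsMPInv A Ad) (hBd : IsMPInv B Bd)
    (v : Fin n → ℝ) :
    v ⬝ᵥ Bd *ᵥ v ≤ v ⬝ᵥ Ad *ᵥ v := by
  have hB : B.IsSymm := by simpa using (hA.add hAB).isSymm
  have hyAy : (Bd *ᵥ v) ⬝ᵥ A *ᵥ (Bd *ᵥ v) ≤ v ⬝ᵥ Bd *ᵥ v := by
    have hnonneg := hAB.dotProduct_mulVec_nonneg (Bd *ᵥ v)
    rw [star_trivial, sub_mulVec, dotProduct_sub, dotProduct_mulVec_self hB hBd] at hnonneg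
    linarith
  have hy : (Bd * B) *ᵥ (Bd *ᵥ v) = Bd *ᵥ v := by rw [mulVec_mulVec, hBd.2.1]
  have := two_mul_dotProduct_sub_le (v := v) hA hAd (mul_mulVec_eq_of_ker_le hAd hBd hker hy)
  linarith

end IsMPInv

theorem rho_v_homogeneous_monotone_general {n : ℕ} (v : Fin n → ℝ)
    (L L1 L2 : Matrix (Fin n) (Fin n) ℝ)
    (h1psd : L1.PosSemidef)
    (h1ker : ∀ x, L1.mulVec x = 0 → ∃ c : ℝ, x = fun _ => c)
    (h2one : L2.mulVec (fun _ => 1) = 0)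
    (Ld : Matrix (Fin n) (Fin n) ℝ) (hLd : IsMPInv L Ld)
    (κ : ℝ) (hκ : 0 < κ)
    (M : Matrix (Fin n) (Fin n) ℝ) (hM : IsMPInv (κ • L) M)
    (L1d L2d : Matrix (Fin n) (Fin n) ℝ)
    (hL1d : IsMPInv L1 L1d) (hL2d : IsMPInv L2 L2d)
    (hord : (L2 - L1).PosSemidef) :
    v ⬝ᵥ M.mulVec v = κ⁻¹ * (v ⬝ᵥ Ld.mulVec v) ∧
    v ⬝ᵥ L2d.mulVec v ≤ v ⬝ᵥ L1d.mulVec v := by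
  have hker : ∀ x, L1 *ᵥ x = 0 → L2 *ᵥ x = 0 := by
    intro x hx
    obtain ⟨c, rfl⟩ := h1ker x hx
    rw [show (fun _ => c) = c • fun _ : Fin n => (1 : ℝ) by ext; simp, mulVec_smul, h2one,
      smul_zero]
  refine ⟨?_, IsMPInv.dotProduct_mulVec_antitone h1psd hord hker hL1d hL2d v⟩
  rw [hM.unique (hLd.smul hκ.ne'), smul_mulVec, dotProduct_smul, smul_eq_mul]

/-- For `v ∉ span{𝟙}`, the map `ρ_v(L) = vᵀ L† v` is homogeneous of order `-1`
(`ρ_v(κL) = κ⁻¹ ρ_v(L)` for `κ > 0`) and monotone (`L1 ⪯ L2` implies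
`ρ_v(L2) ≤ ρ_v(L1)`) on Laplacians of connected graphs. -/
theorem rho_v_homogeneous_monotone {n : ℕ} (v : Fin n → ℝ)
    (hv : ¬ ∃ c : ℝ, v = fun _ => c)
    (L L1 L2 : Matrix (Fin n) (Fin n) ℝ)
    (hLsym : L.IsSymm) (hLpsd : L.PosSemidef)
    (hLone : L.mulVec (fun _ => 1) = 0)
    (hLker : ∀ x, L.mulVec x = 0 → ∃ c : ℝ, x = fun _ => c)
    (h1sym : L1.IsSymm) (h1psd : L1.PosSemidef)
    (h1one : L1.mulVec (fun _ => 1) = 0)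
    (h1ker : ∀ x, L1.mulVec x = 0 → ∃ c : ℝ, x = fun _ => c)
    (h2sym : L2.IsSymm) (h2psd : L2.PosSemidef)
    (h2one : L2.mulVec (fun _ => 1) = 0)
    (h2ker : ∀ x, L2.mulVec x = 0 → ∃ c : ℝ, x = fun _ => c)
    (Ld : Matrix (Fin n) (Fin n) ℝ) (hLd : IsMPInv L Ld)
    (κ : ℝ) (hκ : 0 < κ)
    (M : Matrix (Fin n) (Fin n) ℝ) (hM : IsMPInv (κ • L) M)
    (L1d L2d : Matrix (Fin n) (Fin n) ℝ)
    (hL1d : IsMPInv L1 L1d) (hL2d : IsMPInv L2 L2d)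
    (hord : (L2 - L1).PosSemidef) :
    v ⬝ᵥ M.mulVec v = κ⁻¹ * (v ⬝ᵥ Ld.mulVec v) ∧
    v ⬝ᵥ L2d.mulVec v ≤ v ⬝ᵥ L1d.mulVec v :=
  rho_v_homogeneous_monotone_general v L L1 L2 h1psd h1ker h2one Ld hLd κ hκ M hM L1d L2d hL1d hL2d
    hord
end

section
/- For a connected weighted graph on n nodes with Laplacian L, maximum edge weight w_*, adjacency matrix A, and n > 2, the bound Π_ρ(L) · ‖A‖_{S_{0,1}} ≥ 2 w_*^{-1} Π_ρ(L_{K_n}) holds, where ‖A‖_{S_{0,1}} is the maximum number of nonzero entries among all rows and columns of A. -/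
/-! Connectivity and `n > 2` force some vertex to have two neighbours, so `‖A‖_{S_{0,1}} ≥ 2` and
`κ := w_* ‖A‖_{S_{0,1}} / 2 ≥ w_*`. Then `κ L_{K_n} - L` is the Laplacian of the nonnegative weights
`κ - A i j`, hence `L ⪯ κ L_{K_n}`, and monotonicity and homogeneity of `ρ` give
`Π_ρ(L) ≥ κ⁻¹ Π_ρ(L_{K_n})`. -/

open Matrix Finset

section Laplacian

variable {ι R : Type*} [Fintype ι] [DecidableEq ι]

def weightedLaplacian [CommRing R] (W : Matrix ι ι R) : Matrix ι ι R :=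
  diagonal (fun i => ∑ j, W i j) - W

theorem weightedLaplacian_mulVec_apply [CommRing R] (W : Matrix ι ι R) (x : ι → R) (i : ι) :
    (weightedLaplacian W *ᵥ x) i = ∑ j, W i j * (x i - x j) := by
  rw [weightedLaplacian, sub_mulVec, Pi.sub_apply, mulVec_diagonal, mulVec, dotProduct, sum_mul]
  simp only [mul_sub, sum_sub_distrib]

theorem weightedLaplacian_sub [CommRing R] (W V : Matrix ι ι R) :
    weightedLaplacian (W - V) = weightedLaplacian W - weightedLaplacian V := by
  simp only [weightedLaplacian, Matrix.sub_apply, sum_sub_distrib, ← diagonal_sub]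
  abel

theorem weightedLaplacian_smul [CommRing R] (c : R) (W : Matrix ι ι R) :
    weightedLaplacian (c • W) = c • weightedLaplacian W := by
  simp only [weightedLaplacian, Matrix.smul_apply, smul_eq_mul, ← mul_sum, smul_sub,
    ← diagonal_smul]
  rfl

theorem weightedLaplacian_of_one [CommRing R] :
    weightedLaplacian (of fun _ _ => (1 : R)) =
      (Fintype.card ι : R) • (1 : Matrix ι ι R) - of fun _ _ => 1 := by
  simp [weightedLaplacian, ← diagonal_one, ← diagonal_smul]

theorem dotProduct_weightedLaplacian_mulVec {W : Matrix ι ι ℝ} (hW : W.IsSymm) (x : ι → ℝ) :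
    x ⬝ᵥ (weightedLaplacian W *ᵥ x) = (1 / 2) * ∑ i, ∑ j, W i j * (x i - x j) ^ 2 := by
  have hform : x ⬝ᵥ (weightedLaplacian W *ᵥ x) = ∑ i, ∑ j, W i j * (x i * (x i - x j)) := by
    simp only [dotProduct, weightedLaplacian_mulVec_apply, mul_sum]
    exact sum_congr rfl fun i _ => sum_congr rfl fun j _ => by ring
  have hswap : ∑ i, ∑ j, W i j * (x i * (x i - x j)) = ∑ i, ∑ j, W i j * (x j * (x j - x i)) := by
    rw [sum_comm]
    exact sum_congr rfl fun i _ => sum_congr rfl fun j _ => by rw [hW.apply i j]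
  have hsplit : ∑ i, ∑ j, W i j * (x i - x j) ^ 2
      = ∑ i, ∑ j, W i j * (x i * (x i - x j)) + ∑ i, ∑ j, W i j * (x j * (x j - x i)) := by
    simp only [← sum_add_distrib]
    exact sum_congr rfl fun i _ => sum_congr rfl fun j _ => by ring
  rw [hsplit, ← hswap, hform]
  ring

theorem posSemidef_weightedLaplacian {W : Matrix ι ι ℝ} (hW : W.IsSymm) (hW0 : ∀ i j, 0 ≤ W i j) :
    (weightedLaplacian W).PosSemidef := by
  refine .of_dotProduct_mulVec_nonneg
    ((isHermitian_diagonal _).sub (isHermitian_iff_isSymm.mpr hW)) fun x => ?_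
  rw [star_trivial, dotProduct_weightedLaplacian_mulVec hW]
  have := sum_nonneg fun i (_ : i ∈ univ) => sum_nonneg fun j (_ : j ∈ univ) =>
    mul_nonneg (hW0 i j) (sq_nonneg (x i - x j))
  positivity

theorem posSemidef_smul_sub_weightedLaplacian {W : Matrix ι ι ℝ} (hW : W.IsSymm) {κ : ℝ}
    (hWκ : ∀ i j, W i j ≤ κ) :
    (κ • ((Fintype.card ι : ℝ) • 1 - of fun _ _ => 1) - weightedLaplacian W).PosSemidef := by
  rw [← weightedLaplacian_of_one, ← weightedLaplacian_smul, ← weightedLaplacian_sub]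
  refine posSemidef_weightedLaplacian (.ext fun i j => by simp [hW.apply i j]) fun i j => ?_
  simpa using hWκ i j

variable {W : Matrix ι ι ℝ}

theorem eq_empty_or_eq_univ_of_forall_apply_eq_zero (hW : W.IsSymm)
    (hker : ∀ x, weightedLaplacian W *ᵥ x = 0 → ∃ c : ℝ, x = fun _ => c) {S : Finset ι}
    (hS : ∀ i ∈ S, ∀ j ∉ S, W i j = 0) : S = ∅ ∨ S = univ := by
  set x : ι → ℝ := fun i => if i ∈ S then 1 else 0
  have hx : weightedLaplacian W *ᵥ x = 0 := by
    funext i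
    rw [weightedLaplacian_mulVec_apply, Pi.zero_apply]
    refine sum_eq_zero fun j _ => ?_
    by_cases hi : i ∈ S <;> by_cases hj : j ∈ S
    · simp [x, hi, hj]
    · simp [hS i hi j hj]
    · simp [← hW.apply i j, hS j hj i hi]
    · simp [x, hi, hj]
  obtain ⟨c, hc⟩ := hker x hx
  rw [or_iff_not_imp_left, ← not_nonempty_iff_eq_empty, not_not, eq_univ_iff_forall]
  rintro ⟨i, hi⟩ j
  by_contra hj
  have h1 : x i = c := congrFun hc i
  have h0 : x j = c := congrFun hc j
  simp only [x, hi, hj, if_true, if_false] at h1 h0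
  linarith

theorem exists_two_le_card_filter_apply_ne_zero (hW : W.IsSymm)
    (hker : ∀ x, weightedLaplacian W *ᵥ x = 0 → ∃ c : ℝ, x = fun _ => c)
    (hι : 2 < Fintype.card ι) : ∃ i, 2 ≤ #{j | W i j ≠ 0} := by
  by_contra! hdeg
  -- if all degrees are at most one, `i₀` and its neighbours form a component of size at most 2
  obtain ⟨i₀⟩ : Nonempty ι := Fintype.card_pos_iff.mp (by omega)
  set S : Finset ι := insert i₀ ({j | W i₀ j ≠ 0} : Finset ι)
  have hclosed : ∀ i ∈ S, ∀ j ∉ S, W i j = 0 := by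
    intro i hi j hj
    simp only [S, mem_insert, mem_filter, mem_univ, true_and, not_or, not_not] at hi hj
    rcases hi with rfl | hi
    · exact hj.2
    · by_contra hij
      have hi₀ : W i i₀ ≠ 0 := by rwa [hW.apply]
      exact hj.1 (card_le_one.mp (Nat.le_of_lt_succ (hdeg i)) j (by simpa using hij) i₀
        (by simpa using hi₀))
  have hcard : #S < Fintype.card ι :=
    (card_insert_le _ _).trans_lt (by have := hdeg i₀; omega)
  rcases eq_empty_or_eq_univ_of_forall_apply_eq_zero hW hker hclosed with h | h
  · exact absurd h (insert_ne_empty _ _)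
  · exact hcard.ne (by rw [h, card_univ])

end Laplacian

theorem rpow_one_div_of_homogeneous {X : Type*} [SMul ℝ X] {ρ : X → ℝ} {α : ℝ} (hα : 0 < α)
    (hhom : ∀ κ : ℝ, 0 < κ → ∀ M, ρ (κ • M) = κ ^ (-α) * ρ M) {κ : ℝ} (hκ : 0 < κ) {M : X}
    (hM : 0 ≤ ρ M) : ρ (κ • M) ^ (1 / α) = κ⁻¹ * ρ M ^ (1 / α) := by
  rw [hhom κ hκ, Real.mul_rpow (by positivity) hM, ← Real.rpow_mul hκ.le,
    show -α * (1 / α) = -1 by field_simp, Real.rpow_neg_one]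

theorem tradeoff_S01_general {n : ℕ} (hn : 2 < n) (α : ℝ) (hα : 0 < α)
    (ρ : Matrix (Fin n) (Fin n) ℝ → ℝ)
    (hρnonneg : ∀ M, 0 ≤ ρ M)
    (hhom : ∀ κ : ℝ, 0 < κ → ∀ M, ρ (κ • M) = κ ^ (-α) * ρ M)
    (hmono : ∀ M1 M2 : Matrix (Fin n) (Fin n) ℝ, (M1 - M2).PosSemidef → ρ M1 ≤ ρ M2)
    (wstar : ℝ) (hw : 0 < wstar)
    (A : Matrix (Fin n) (Fin n) ℝ)
    (hAsym : Aᵀ = A) (hAbound : ∀ i j, A i j ≤ wstar)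
    (L : Matrix (Fin n) (Fin n) ℝ)
    (hL : L = Matrix.diagonal (fun i => ∑ j, A i j) - A)
    (hconn : ∀ x, L.mulVec x = 0 → ∃ c : ℝ, x = fun _ => c)
    (LKn : Matrix (Fin n) (Fin n) ℝ)
    (hKn : LKn = (n : ℝ) • (1 : Matrix (Fin n) (Fin n) ℝ) - Matrix.of (fun _ _ => (1 : ℝ)))
    (S01 : ℕ)
    (hS01 : S01 = max
      (Finset.univ.sup (fun i => (Finset.univ.filter (fun j => A i j ≠ 0)).card))
      (Finset.univ.sup (fun j => (Finset.univ.filter (fun i => A i j ≠ 0)).card))) :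
    2 * wstar⁻¹ * ρ LKn ^ (1/α) ≤ ρ L ^ (1/α) * (S01 : ℝ) := by
  change L = weightedLaplacian A at hL
  subst hL
  obtain ⟨i, hi⟩ := exists_two_le_card_filter_apply_ne_zero hAsym hconn (by simpa using hn)
  have hS01_two : (2 : ℝ) ≤ S01 := by
    rw [hS01]
    exact_mod_cast hi.trans ((le_sup (f := fun i => #{j | A i j ≠ 0}) (mem_univ i)).trans
      (le_max_left _ _))
  set κ : ℝ := wstar * S01 / 2
  have hκ : 0 < κ := by positivity
  have hpsd : (κ • LKn - weightedLaplacian A).PosSemidef := by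
    have hκw : wstar ≤ κ := by simp only [κ]; nlinarith
    simpa [hKn] using
      posSemidef_smul_sub_weightedLaplacian hAsym fun i j => (hAbound i j).trans hκw
  have hle : κ⁻¹ * ρ LKn ^ (1 / α) ≤ ρ (weightedLaplacian A) ^ (1 / α) := by
    rw [← rpow_one_div_of_homogeneous hα hhom hκ (hρnonneg _)]
    exact Real.rpow_le_rpow (hρnonneg _) (hmono _ _ hpsd) (by positivity)
  calc 2 * wstar⁻¹ * ρ LKn ^ (1 / α) = κ⁻¹ * ρ LKn ^ (1 / α) * S01 := by
        simp only [κ]; field_simp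
    _ ≤ ρ (weightedLaplacian A) ^ (1 / α) * S01 := by gcongr

/-- Fundamental tradeoff between performance and the `S_{0,1}` sparsity measure
(the maximum number of nonzero entries among all rows and columns):
`Π_ρ(L) ⋅ ‖A‖_{S_{0,1}} ≥ 2 w_*⁻¹ Π_ρ(L_{K_n})` when `n > 2`. -/
theorem tradeoff_S01 {n : ℕ} (hn : 2 < n) (α : ℝ) (hα : 0 < α)
    (ρ : Matrix (Fin n) (Fin n) ℝ → ℝ)
    (hρnonneg : ∀ M, 0 ≤ ρ M)
    (hhom : ∀ κ : ℝ, 0 < κ → ∀ M, ρ (κ • M) = κ ^ (-α) * ρ M)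
    (hmono : ∀ M1 M2 : Matrix (Fin n) (Fin n) ℝ, (M1 - M2).PosSemidef → ρ M1 ≤ ρ M2)
    (wstar : ℝ) (hw : 0 < wstar)
    (A : Matrix (Fin n) (Fin n) ℝ)
    (hAsym : Aᵀ = A) (hAnonneg : ∀ i j, 0 ≤ A i j)
    (hAdiag : ∀ i, A i i = 0) (hAbound : ∀ i j, A i j ≤ wstar)
    (L : Matrix (Fin n) (Fin n) ℝ)
    (hL : L = Matrix.diagonal (fun i => ∑ j, A i j) - A)
    (hconn : ∀ x, L.mulVec x = 0 → ∃ c : ℝ, x = fun _ => c)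
    (LKn : Matrix (Fin n) (Fin n) ℝ)
    (hKn : LKn = (n : ℝ) • (1 : Matrix (Fin n) (Fin n) ℝ) - Matrix.of (fun _ _ => (1 : ℝ)))
    (S01 : ℕ)
    (hS01 : S01 = max
      (Finset.univ.sup (fun i => (Finset.univ.filter (fun j => A i j ≠ 0)).card))
      (Finset.univ.sup (fun j => (Finset.univ.filter (fun i => A i j ≠ 0)).card))) :
    2 * wstar⁻¹ * ρ LKn ^ (1/α) ≤ ρ L ^ (1/α) * (S01 : ℝ) :=
  tradeoff_S01_general hn α hα ρ hρnonneg hhom hmono wstar hw A hAsym hAbound L hL hconn LKn hKn S01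
    hS01
end
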